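/- arXiv:1805.04898 — 2 statements merged into one kernel-verified Lean document; each statement's English description precedes it below -/
import Mathlib

section
/- Under Assumptions Q1 and A1-i, for every payoff vector π ∈ ℝ^𝒜 and every action a ∈ 𝒜, the individual ex-ante first-order net gain satisfies g_{a*}[π] ≥ 0, and g_{a*}[π] = 0 if and only if π_a = max_{b∈𝒜} π_b. -/
open MeasureTheory Finset
open scoped Classical

/-- The maximal payoff among actions in `S` (zero for the empty set, which is
    always weighted by probability zero). -/
noncomputable def piStar {A : Type*} (π : A → ℝ) (S : Finset A) : ℝ :=
  if h : S.Nonempty then S.sup' h π else 0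

/-- `Q(q) = μ_Q((-∞, q])`. -/
noncomputable def Qfun (μQ : Measure ℝ) (q : ℝ) : ℝ := (μQ (Set.Iic q)).toReal

/-- The individual ex-ante first-order net gain `g_{a*}[π]`. -/
noncomputable def gain {A : Type*} [Fintype A] [DecidableEq A]
    (P : A → Finset A → ℝ) (μQ : Measure ℝ) (π : A → ℝ) (a : A) : ℝ :=
  ∑ A' ∈ (Finset.univ.erase a).powerset,
    P a A' * ∫ q, max (piStar π A' - π a - q) 0 ∂μQ

/-!
The gain `g_{a*}[π]` is a `P a`-weighted sum of the nonnegative terms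
`∫ max (π_*(A') - π_a - q) 0 dμ_Q`. By Q1, `μ_Q` is carried by `[0, ∞)` and charges every
`[0, q]` with `q > 0`, so such a term vanishes exactly when `π_*(A') ≤ π_a`. Hence the gain
vanishes iff `π_a` dominates every menu `A'` drawn with positive probability; these menus are
nonempty, and by A1-i every other action lies in one of them, so this says that `π_a` is maximal.
-/

section ThresholdIntegral

variable {μ : Measure ℝ}

lemma ae_nonneg_of_forall_neg_Qfun_eq_zero [IsFiniteMeasure μ]
    (hneg : ∀ q : ℝ, q < 0 → Qfun μ q = 0) : ∀ᵐ q ∂μ, 0 ≤ q := by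
  have hIic : ∀ n : ℕ, μ (Set.Iic (-(1 / ((n : ℝ) + 1)))) = 0 := fun n =>
    ((ENNReal.toReal_eq_zero_iff _).1 (hneg _ (by rw [neg_lt_zero]; positivity))).resolve_right
      (measure_ne_top _ _)
  have hIio : ⋃ n : ℕ, Set.Iic (-(1 / ((n : ℝ) + 1))) = Set.Iio 0 :=
    iUnion_Iic_eq_Iio_of_lt_of_tendsto (F := Filter.atTop)
      (fun n => by rw [neg_lt_zero]; positivity)
      (by simpa using (tendsto_one_div_add_atTop_nhds_zero_nat (𝕜 := ℝ)).neg)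
  have hnull := measure_iUnion_null hIic
  rw [hIio] at hnull
  rw [ae_iff]
  simp only [not_le]
  exact hnull

lemma measure_Iio_eq_zero_iff_of_Qfun [IsFiniteMeasure μ]
    (hneg : ∀ q : ℝ, q < 0 → Qfun μ q = 0) (hpos : ∀ q : ℝ, 0 < q → 0 < Qfun μ q) (d : ℝ) :
    μ (Set.Iio d) = 0 ↔ d ≤ 0 := by
  refine ⟨fun hd => ?_, fun hd => ?_⟩
  · by_contra! hd_pos
    have hQ : 0 < μ (Set.Iic (d / 2)) := (ENNReal.toReal_pos_iff.1 (hpos _ (by linarith))).1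
    exact hQ.ne' (measure_mono_null (Set.Iic_subset_Iio.2 (by linarith)) hd)
  · refine measure_mono_null (Set.Iio_subset_Iio hd) ?_
    have hnull := ae_iff.1 (ae_nonneg_of_forall_neg_Qfun_eq_zero hneg)
    simp only [not_le] at hnull
    exact hnull

lemma integrable_max_sub_zero [IsFiniteMeasure μ] (hμ : ∀ᵐ q ∂μ, 0 ≤ q) (d : ℝ) :
    Integrable (fun q => max (d - q) 0) μ := by
  refine Integrable.mono' (integrable_const (max d 0)) (by fun_prop) ?_
  filter_upwards [hμ] with q hq
  rw [Real.norm_eq_abs, abs_of_nonneg (le_max_right _ _)]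
  exact max_le_max (by linarith) le_rfl

lemma integral_max_sub_eq_zero_iff [IsFiniteMeasure μ] (hμ : ∀ᵐ q ∂μ, 0 ≤ q) (d : ℝ) :
    ∫ q, max (d - q) 0 ∂μ = 0 ↔ μ (Set.Iio d) = 0 := by
  have hsupp : Function.support (fun q => max (d - q) 0) = Set.Iio d := by
    ext q; simp
  have hnn : 0 ≤ ∫ q, max (d - q) 0 ∂μ := integral_nonneg fun q => le_max_right _ _
  rw [← not_iff_not, ← Ne, ← Ne, ← hnn.lt_iff_ne', ← pos_iff_ne_zero, ← hsupp]
  exact integral_pos_iff_support_of_nonneg_ae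
    (Filter.Eventually.of_forall fun q => le_max_right _ _) (integrable_max_sub_zero hμ d)

end ThresholdIntegral

lemma le_piStar {A : Type*} (π : A → ℝ) {S : Finset A} {b : A} (hb : b ∈ S) :
    π b ≤ piStar π S := by
  rw [piStar, dif_pos ⟨b, hb⟩]
  exact le_sup' π hb

lemma piStar_le_sup' {A : Type*} [Fintype A] [Nonempty A] (π : A → ℝ) {S : Finset A}
    (hS : S.Nonempty) : piStar π S ≤ univ.sup' univ_nonempty π := by
  rw [piStar, dif_pos hS]
  exact sup'_le _ _ fun b _ => le_sup' π (mem_univ b)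

section Gain

variable {A : Type*} [Fintype A] [DecidableEq A] {P : A → Finset A → ℝ} {μQ : Measure ℝ}

lemma gain_nonneg (hPnn : ∀ a A', 0 ≤ P a A') (π : A → ℝ) (a : A) : 0 ≤ gain P μQ π a :=
  sum_nonneg fun A' _ => mul_nonneg (hPnn a A') (integral_nonneg fun _ => le_max_right _ _)

lemma gain_eq_zero_iff (hPnn : ∀ a A', 0 ≤ P a A')
    (hμQ : ∀ d : ℝ, ∫ q, max (d - q) 0 ∂μQ = 0 ↔ d ≤ 0) (π : A → ℝ) (a : A) :
    gain P μQ π a = 0 ↔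
      ∀ A' ∈ (univ.erase a).powerset, P a A' ≠ 0 → piStar π A' ≤ π a := by
  rw [gain, sum_eq_zero_iff_of_nonneg]
  · simp only [mul_eq_zero, hμQ, sub_nonpos, or_iff_not_imp_left]
  · exact fun A' _ => mul_nonneg (hPnn a A') (integral_nonneg fun _ => le_max_right _ _)

lemma forall_piStar_le_iff_eq_sup' [Nonempty A] {a : A} (hPempty : P a ∅ = 0)
    (hA1i : ∀ b : A, b ≠ a →
      0 < ∑ A' ∈ (univ.erase a).powerset.filter (fun A' => b ∈ A'), P a A')
    (π : A → ℝ) :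
    (∀ A' ∈ (univ.erase a).powerset, P a A' ≠ 0 → piStar π A' ≤ π a) ↔
      π a = univ.sup' univ_nonempty π := by
  refine ⟨fun h => ?_, fun hmax A' _ hP => ?_⟩
  · obtain ⟨b, -, hb⟩ := exists_mem_eq_sup' univ_nonempty π
    refine le_antisymm (le_sup' π (mem_univ a)) (hb ▸ ?_)
    by_cases hba : b = a
    · exact hba ▸ le_rfl
    obtain ⟨A', hA', hP⟩ := exists_ne_zero_of_sum_ne_zero (hA1i b hba).ne'
    rw [mem_filter] at hA'
    exact (le_piStar π hA'.2).trans (h A' hA'.1 hP)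
  · have hA' : A'.Nonempty := nonempty_iff_ne_empty.2 fun h => hP (h ▸ hPempty)
    exact hmax ▸ piStar_le_sup' π hA'

end Gain

theorem stmt0_general {A : Type*} [Fintype A] [DecidableEq A] [Nonempty A]
    (P : A → Finset A → ℝ) (μQ : Measure ℝ) [IsProbabilityMeasure μQ]
    -- `P a` is a probability mass function on the subsets of `𝒜 ∖ {a}` with `P a ∅ = 0`
    (hPnn : ∀ a A', 0 ≤ P a A')
    (hPempty : ∀ a, P a (∅ : Finset A) = 0)
    -- Assumption Q1
    (hQ1a : ∀ q : ℝ, q < 0 → Qfun μQ q = 0)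
    (hQ1b : ∀ q : ℝ, 0 < q → 0 < Qfun μQ q)
    -- Assumption A1-i
    (hA1i : ∀ a b : A, b ≠ a →
      0 < ∑ A' ∈ (Finset.univ.erase a).powerset.filter (fun A' => b ∈ A'), P a A')
    (π : A → ℝ) (a : A) :
    0 ≤ gain P μQ π a ∧
      (gain P μQ π a = 0 ↔ π a = Finset.univ.sup' Finset.univ_nonempty π) := by
  have hμQ (d : ℝ) : ∫ q, max (d - q) 0 ∂μQ = 0 ↔ d ≤ 0 :=
    (integral_max_sub_eq_zero_iff (ae_nonneg_of_forall_neg_Qfun_eq_zero hQ1a) d).trans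
      (measure_Iio_eq_zero_iff_of_Qfun hQ1a hQ1b d)
  exact ⟨gain_nonneg hPnn π a, (gain_eq_zero_iff hPnn hμQ π a).trans
    (forall_piStar_le_iff_eq_sup' (hPempty a) (hA1i a) π)⟩

theorem stmt0 {A : Type*} [Fintype A] [DecidableEq A] [Nonempty A]
    (P : A → Finset A → ℝ) (μQ : Measure ℝ) [IsProbabilityMeasure μQ]
    -- `P a` is a probability mass function on the subsets of `𝒜 ∖ {a}` with `P a ∅ = 0`
    (hPnn : ∀ a A', 0 ≤ P a A')
    (hPsupp : ∀ a A', ¬ A' ⊆ Finset.univ.erase a → P a A' = 0)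
    (hPempty : ∀ a, P a (∅ : Finset A) = 0)
    (hPsum : ∀ a, ∑ A' ∈ (Finset.univ.erase a).powerset, P a A' = 1)
    -- Assumption Q1
    (hQ1a : ∀ q : ℝ, q < 0 → Qfun μQ q = 0)
    (hQ1b : ∀ q : ℝ, 0 < q → 0 < Qfun μQ q)
    -- Assumption A1-i
    (hA1i : ∀ a b : A, b ≠ a →
      0 < ∑ A' ∈ (Finset.univ.erase a).powerset.filter (fun A' => b ∈ A'), P a A')
    (π : A → ℝ) (a : A) :
    0 ≤ gain P μQ π a ∧
      (gain P μQ π a = 0 ↔ π a = Finset.univ.sup' Finset.univ_nonempty π) :=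
  stmt0_general P μQ hPnn hPempty hQ1a hQ1b hA1i π a
end

section
/- Let 𝒳 be a compact metric space, X* ⊆ 𝒳 nonempty and closed, and X' an open neighborhood of X* with X' ≠ 𝒳. Let W : 𝒳 → ℝ be continuous with W(x) ≥ 0 for all x ∈ cl X' and {x ∈ cl X' : W(x) = 0} = X*. Then there exists an open neighborhood X'' of X* with X'' ⊆ X' such that the following holds: every continuous path x : [0,∞) → 𝒳 with x_0 ∈ X'' and with the property that, for every t ≥ 0, if x_τ ∈ X' for all τ ∈ [0, t) then W(x_t) ≤ W(x_0), satisfies x_t ∈ X'' for all t ≥ 0 (i.e., X'' is forward invariant for all such paths). -/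
/-!
Let `c > 0` be the minimum of `W` on the compact set `closure X' \ X'` (where `W > 0`, since its
zeros in `closure X'` lie in `X* ⊆ X'`), and take `X'' = X' ∩ {W < c}`. A path starting in `X''`
can only leave it through a first exit time `t`; before `t` it lies in `X'`, so
`W (x t) ≤ W (x 0) < c`, and `x t ∈ closure X'` then forces `x t ∈ X'`, hence `x t ∈ X''`.
-/

open Set

theorem ContinuousOn.forall_Ici_mem_of_open {X : Type*} [TopologicalSpace X] {U : Set X}
    (hU : IsOpen U) {x : ℝ → X} (hx : ContinuousOn x (Ici 0)) (h0 : x 0 ∈ U)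
    (hstep : ∀ t, 0 < t → (∀ τ ∈ Ico 0 t, x τ ∈ U) → x t ∈ closure U → x t ∈ U) :
    ∀ t, 0 ≤ t → x t ∈ U := by
  by_contra! ⟨t, ht, hxt⟩
  -- `sInf B` is the first exit time
  set B : Set ℝ := Ici 0 ∩ x ⁻¹' Uᶜ
  have hBbdd : BddBelow B := ⟨0, fun s hs => hs.1⟩
  have hexit : sInf B ∈ B :=
    (hx.preimage_isClosed_of_isClosed isClosed_Ici hU.isClosed_compl).csInf_mem ⟨t, ht, hxt⟩ hBbdd
  have hbefore : ∀ τ ∈ Ico 0 (sInf B), x τ ∈ U := fun τ ⟨hτ0, hτlt⟩ =>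
    by_contra fun hτ => (csInf_le hBbdd ⟨hτ0, hτ⟩).not_gt hτlt
  have hpos : 0 < sInf B := hexit.1.lt_of_ne fun h => hexit.2 (h ▸ h0)
  refine hexit.2 (hstep _ hpos hbefore ?_)
  have hlim : sInf B ∈ closure (Ico 0 (sInf B)) := by
    rw [closure_Ico hpos.ne]
    exact ⟨hpos.le, le_rfl⟩
  refine closure_mono ?_ (((hx _ hpos.le).mono Ico_subset_Ici_self).mem_closure_image hlim)
  rintro _ ⟨τ, hτ, rfl⟩
  exact hbefore τ hτ

theorem stmt13_general {X : Type*} [MetricSpace X] [CompactSpace X]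
    (Xstar : Set X)
    (X' : Set X) (hX'open : IsOpen X') (hX'nbhd : Xstar ⊆ X')
    (W : X → ℝ) (hWcont : Continuous W)
    (hWnn : ∀ x ∈ closure X', 0 ≤ W x)
    (hWzero : {x ∈ closure X' | W x = 0} = Xstar) :
    ∃ X'' : Set X, IsOpen X'' ∧ Xstar ⊆ X'' ∧ X'' ⊆ X' ∧
      ∀ x : ℝ → X, ContinuousOn x (Set.Ici 0) → x 0 ∈ X'' →
        (∀ t : ℝ, 0 ≤ t → (∀ τ ∈ Set.Ico (0 : ℝ) t, x τ ∈ X') → W (x t) ≤ W (x 0)) →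
        ∀ t : ℝ, 0 ≤ t → x t ∈ X'' := by
  have hWpos : ∀ z ∈ closure X' \ X', 0 < W z := fun z hz =>
    (hWnn z hz.1).lt_of_ne fun h => hz.2 (hX'nbhd (hWzero ▸ ⟨hz.1, h.symm⟩))
  obtain ⟨c, hc, hcW⟩ :=
    (isClosed_closure.sdiff hX'open).isCompact.exists_forall_le' hWcont.continuousOn hWpos
  refine ⟨X' ∩ W ⁻¹' Iio c, hX'open.inter (isOpen_Iio.preimage hWcont), ?_, inter_subset_left, ?_⟩
  · intro y hy
    have hWy : W y = 0 := (hWzero.symm ▸ hy : y ∈ {x ∈ closure X' | W x = 0}).2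
    exact ⟨hX'nbhd hy, show W y < c by rwa [hWy]⟩
  intro x hx hx0 hW
  refine hx.forall_Ici_mem_of_open (hX'open.inter (isOpen_Iio.preimage hWcont)) hx0
    fun t ht hbefore hcl => ?_
  have hWt : W (x t) < c := (hW t ht.le fun τ hτ => (hbefore τ hτ).1).trans_lt hx0.2
  exact ⟨by_contra fun hout => (hcW _ ⟨closure_mono inter_subset_left hcl, hout⟩).not_gt hWt, hWt⟩

/-- Given a compact metric space `𝒳`, a nonempty closed set `X*`, a proper open
neighborhood `X'` of `X*`, and a continuous function `W` that is nonnegative on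
`cl X'` and vanishes on `cl X'` exactly on `X*`, there is a smaller open
neighborhood `X''` of `X*` inside `X'` that is forward invariant for every
continuous path that starts in `X''` and does not increase `W` as long as it
has stayed in `X'`. -/
theorem stmt13 {X : Type*} [MetricSpace X] [CompactSpace X]
    (Xstar : Set X) (hXne : Xstar.Nonempty) (hXcl : IsClosed Xstar)
    (X' : Set X) (hX'open : IsOpen X') (hX'nbhd : Xstar ⊆ X') (hX'ne : X' ≠ Set.univ)
    (W : X → ℝ) (hWcont : Continuous W)
    (hWnn : ∀ x ∈ closure X', 0 ≤ W x)
    (hWzero : {x ∈ closure X' | W x = 0} = Xstar) :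
    ∃ X'' : Set X, IsOpen X'' ∧ Xstar ⊆ X'' ∧ X'' ⊆ X' ∧
      ∀ x : ℝ → X, ContinuousOn x (Set.Ici 0) → x 0 ∈ X'' →
        (∀ t : ℝ, 0 ≤ t → (∀ τ ∈ Set.Ico (0 : ℝ) t, x τ ∈ X') → W (x t) ≤ W (x 0)) →
        ∀ t : ℝ, 0 ≤ t → x t ∈ X'' :=
  stmt13_general Xstar X' hX'open hX'nbhd W hWcont hWnn hWzero
end
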